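/- arXiv:2301.02520 — 2 statements merged into one kernel-verified Lean document; each statement's English description precedes it below -/
import Mathlib

section
/- Let X be a real Banach space, D ⊆ X a linear subspace and A : D → X a linear map. Let T : (0,∞) → (X →L X) be a family of bounded linear operators such that for every τ > 0 and every x ∈ X one has T(τ)x ∈ D and ‖A(T(τ)x)‖ ≤ (l₀/τ)·‖x‖, where l₀ ≥ 0 is a constant. Let T₀ > 0, η ∈ (0,1], l ≥ 0 and let B : [0,T₀] → X satisfy ‖B(t) − B(s)‖ ≤ l·|t−s|^η for all t, s ∈ [0,T₀]. Fix t ∈ (0,T₀]. Then the function g : [0,t) → X defined by g(s) = A(T(t−s)(B(s) − B(t))) satisfies the bound ‖g(s)‖ ≤ l·l₀·(t−s)^(η−1) for all s ∈ [0,t); consequently, if g is continuous on [0,t), it is Bochner integrable on (0,t) and ‖∫₀ᵗ g(s) ds‖ ≤ l·l₀·t^η/η. -/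
/-!
`T(t - s)` costs a factor `l₀ / (t - s)` while the Hölder increment `B s - B t` gains
`l (t - s) ^ η`, so the integrand is dominated by `l l₀ (t - s) ^ (η - 1)`. This singularity
is integrable because `η > 0`, with `∫₀ᵗ (t - s) ^ (η - 1) ds = t ^ η / η`.
-/

open MeasureTheory Set

lemma div_mul_mul_rpow_eq {τ : ℝ} (hτ : 0 < τ) (l₀ l η : ℝ) :
    l₀ / τ * (l * τ ^ η) = l * l₀ * τ ^ (η - 1) := by
  rw [Real.rpow_sub hτ, Real.rpow_one]
  field_simp

lemma integrableOn_Ioo_sub_rpow (t : ℝ) {η : ℝ} (hη : 0 < η) :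
    IntegrableOn (fun s : ℝ => (t - s) ^ (η - 1)) (Ioo 0 t) := by
  have h : IntervalIntegrable (fun s : ℝ => (t - s) ^ (η - 1)) volume 0 t := by
    simpa using
      (intervalIntegral.intervalIntegrable_rpow' (a := 0) (b := t) (r := η - 1)
        (by linarith)).comp_sub_left t |>.symm
  exact h.def'.mono_set (Ioo_subset_Ioc_self.trans Ioc_subset_uIoc)

lemma integral_Ioo_sub_rpow {t η : ℝ} (ht : 0 ≤ t) (hη : 0 < η) :
    ∫ s in Ioo 0 t, (t - s) ^ (η - 1) = t ^ η / η := by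
  rw [← integral_Ioc_eq_integral_Ioo, ← intervalIntegral.integral_of_le ht,
    intervalIntegral.integral_comp_sub_left (fun u : ℝ => u ^ (η - 1)) t, sub_self, sub_zero,
    integral_rpow (Or.inl (by linarith)), sub_add_cancel, Real.zero_rpow hη.ne', sub_zero]

section SubRpowDomination

variable {E : Type*} [NormedAddCommGroup E] {g : ℝ → E} {C t η : ℝ}

lemma integrableOn_Ioo_of_norm_le_mul_sub_rpow (hη : 0 < η)
    (hg : AEStronglyMeasurable g (volume.restrict (Ioo 0 t)))
    (hle : ∀ s ∈ Ioo 0 t, ‖g s‖ ≤ C * (t - s) ^ (η - 1)) :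
    IntegrableOn g (Ioo 0 t) :=
  ((integrableOn_Ioo_sub_rpow t hη).const_mul C).mono' hg
    ((ae_restrict_iff' measurableSet_Ioo).2 (.of_forall hle))

lemma norm_integral_Ioo_le_of_norm_le_mul_sub_rpow [NormedSpace ℝ E] (ht : 0 ≤ t) (hη : 0 < η)
    (hle : ∀ s ∈ Ioo 0 t, ‖g s‖ ≤ C * (t - s) ^ (η - 1)) :
    ‖∫ s in Ioo 0 t, g s‖ ≤ C * t ^ η / η := by
  calc ‖∫ s in Ioo 0 t, g s‖ ≤ ∫ s in Ioo 0 t, C * (t - s) ^ (η - 1) :=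
        norm_integral_le_of_norm_le ((integrableOn_Ioo_sub_rpow t hη).const_mul C)
          ((ae_restrict_iff' measurableSet_Ioo).2 (.of_forall hle))
    _ = C * t ^ η / η := by rw [integral_const_mul, integral_Ioo_sub_rpow ht hη, mul_div_assoc]

end SubRpowDomination

theorem regularity_integrand_bound_general
    (X : Type*) [NormedAddCommGroup X] [NormedSpace ℝ X]
    (D : Submodule ℝ X) (A : D →ₗ[ℝ] X)
    (T : ℝ → X →L[ℝ] X) (l₀ : ℝ) (hl₀ : 0 ≤ l₀)
    (hmem : ∀ τ : ℝ, 0 < τ → ∀ x : X, T τ x ∈ D)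
    (hAbound : ∀ (τ : ℝ) (hτ : 0 < τ) (x : X),
      ‖A ⟨T τ x, hmem τ hτ x⟩‖ ≤ l₀ / τ * ‖x‖)
    (T₀ : ℝ) (η : ℝ) (hη : η ∈ Set.Ioc (0 : ℝ) 1) (l : ℝ)
    (B : ℝ → X)
    (hB : ∀ t ∈ Set.Icc (0 : ℝ) T₀, ∀ s ∈ Set.Icc (0 : ℝ) T₀,
      ‖B t - B s‖ ≤ l * |t - s| ^ η)
    (t : ℝ) (ht : t ∈ Set.Ioc (0 : ℝ) T₀)
    (g : ℝ → X)
    (hg : ∀ s : ℝ, ∀ hs : s ∈ Set.Ico (0 : ℝ) t,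
      g s = A ⟨T (t - s) (B s - B t), hmem (t - s) (sub_pos.mpr hs.2) (B s - B t)⟩) :
    (∀ s ∈ Set.Ico (0 : ℝ) t, ‖g s‖ ≤ l * l₀ * (t - s) ^ (η - 1)) ∧
    (ContinuousOn g (Set.Ico 0 t) →
      IntegrableOn g (Set.Ioo 0 t) volume ∧
      ‖∫ s in Set.Ioo (0 : ℝ) t, g s‖ ≤ l * l₀ * t ^ η / η) := by
  obtain ⟨ht₀, htT₀⟩ := ht
  have hbound : ∀ s ∈ Ico 0 t, ‖g s‖ ≤ l * l₀ * (t - s) ^ (η - 1) := by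
    intro s hs
    have hts : 0 < t - s := sub_pos.mpr hs.2
    have hB_st : ‖B s - B t‖ ≤ l * (t - s) ^ η := by
      simpa [abs_sub_comm, abs_of_pos hts] using
        hB s ⟨hs.1, hs.2.le.trans htT₀⟩ t ⟨ht₀.le, htT₀⟩
    calc ‖g s‖ ≤ l₀ / (t - s) * ‖B s - B t‖ := hg s hs ▸ hAbound (t - s) hts (B s - B t)
      _ ≤ l₀ / (t - s) * (l * (t - s) ^ η) := by gcongr
      _ = l * l₀ * (t - s) ^ (η - 1) := div_mul_mul_rpow_eq hts l₀ l η
  have hbound_Ioo : ∀ s ∈ Ioo 0 t, ‖g s‖ ≤ l * l₀ * (t - s) ^ (η - 1) :=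
    fun s hs => hbound s (Ioo_subset_Ico_self hs)
  refine ⟨hbound, fun hcont => ⟨?_, ?_⟩⟩
  · exact integrableOn_Ioo_of_norm_le_mul_sub_rpow hη.1
      ((hcont.mono Ioo_subset_Ico_self).aestronglyMeasurable measurableSet_Ioo) hbound_Ioo
  · exact norm_integral_Ioo_le_of_norm_le_mul_sub_rpow ht₀.le hη.1 hbound_Ioo

/-- Key estimate in the proof of the regularity lemma: the integrand
s ↦ A T(t−s)(B(s) − B(t)) is bounded by l·l₀·(t−s)^(η−1), hence (if continuous)
Bochner integrable over (0,t) with ‖∫₀ᵗ g‖ ≤ l·l₀·t^η/η. -/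
theorem regularity_integrand_bound
    (X : Type*) [NormedAddCommGroup X] [NormedSpace ℝ X] [CompleteSpace X]
    (D : Submodule ℝ X) (A : D →ₗ[ℝ] X)
    (T : ℝ → X →L[ℝ] X) (l₀ : ℝ) (hl₀ : 0 ≤ l₀)
    (hmem : ∀ τ : ℝ, 0 < τ → ∀ x : X, T τ x ∈ D)
    (hAbound : ∀ (τ : ℝ) (hτ : 0 < τ) (x : X),
      ‖A ⟨T τ x, hmem τ hτ x⟩‖ ≤ l₀ / τ * ‖x‖)
    (T₀ : ℝ) (hT₀ : 0 < T₀) (η : ℝ) (hη : η ∈ Set.Ioc (0 : ℝ) 1) (l : ℝ) (hl : 0 ≤ l)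
    (B : ℝ → X)
    (hB : ∀ t ∈ Set.Icc (0 : ℝ) T₀, ∀ s ∈ Set.Icc (0 : ℝ) T₀,
      ‖B t - B s‖ ≤ l * |t - s| ^ η)
    (t : ℝ) (ht : t ∈ Set.Ioc (0 : ℝ) T₀)
    (g : ℝ → X)
    (hg : ∀ s : ℝ, ∀ hs : s ∈ Set.Ico (0 : ℝ) t,
      g s = A ⟨T (t - s) (B s - B t), hmem (t - s) (sub_pos.mpr hs.2) (B s - B t)⟩) :
    (∀ s ∈ Set.Ico (0 : ℝ) t, ‖g s‖ ≤ l * l₀ * (t - s) ^ (η - 1)) ∧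
    (ContinuousOn g (Set.Ico 0 t) →
      IntegrableOn g (Set.Ioo 0 t) volume ∧
      ‖∫ s in Set.Ioo (0 : ℝ) t, g s‖ ≤ l * l₀ * t ^ η / η) :=
  regularity_integrand_bound_general X D A T l₀ hl₀ hmem hAbound T₀ η hη l B hB t ht g hg
end

section
/- Let X be a real Banach space, D ⊆ X a linear subspace and A : D → X a linear map whose graph is closed in X × X. Let T₀ > 0, η ∈ (0,1], l ≥ 0, l₀ ≥ 0, M ≥ 0, and let T : (0,∞) → (X →L X) and B : [0,T₀] → X be such that: (i) ‖B(t) − B(s)‖ ≤ l·|t−s|^η for all t, s ∈ [0,T₀]; (ii) for every τ > 0 and x ∈ X, T(τ)x ∈ D and ‖A(T(τ)x)‖ ≤ (l₀/τ)·‖x‖, and ‖T(τ)‖ ≤ M; (iii) for a fixed t ∈ (0,T₀], the maps s ↦ T(t−s)(B(s) − B(t)) and s ↦ A(T(t−s)(B(s) − B(t))) are continuous on [0,t); (iv) for every ε ∈ (0,t), the truncated integral w_ε := ∫₀^(t−ε) T(t−s)(B(s) − B(t)) ds belongs to D and A(w_ε) = ∫₀^(t−ε) A(T(t−s)(B(s)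 − B(t))) ds. Then the element w := ∫₀ᵗ T(t−s)(B(s) − B(t)) ds belongs to D and A(w) = ∫₀ᵗ A(T(t−s)(B(s) − B(t))) ds. -/
/-!
Near `s = t` the Hölder bound on `B` tames both integrands:
`‖T(t-s)(B s - B t)‖ ≤ M l (t-s)^η` and `‖A T(t-s)(B s - B t)‖ ≤ l₀ l (t-s)^(η-1)`, which are
integrable on `(0, t)` because `η > 0`. So the truncated integrals converge to the full ones as
`ε → 0⁺`, and the closed graph of `A` carries membership in `D` and the identity to the limit.
-/

open MeasureTheory Set Filter Topology

theorem exists_mem_apply_eq_of_isClosed_graph {E F S ι : Type*} [TopologicalSpace E]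
    [TopologicalSpace F] [SetLike S E] {D : S} {A : D → F}
    (hA : IsClosed (range fun d : D => ((d : E), A d))) {l : Filter ι} [l.NeBot]
    {x : ι → E} {y : ι → F} {x₀ : E} {y₀ : F} (hx : Tendsto x l (𝓝 x₀))
    (hy : Tendsto y l (𝓝 y₀)) (hxy : ∀ᶠ i in l, ∃ h : x i ∈ D, A ⟨x i, h⟩ = y i) :
    ∃ h : x₀ ∈ D, A ⟨x₀, h⟩ = y₀ := by
  obtain ⟨d, hd⟩ := hA.mem_of_tendsto (hx.prodMk_nhds hy)
    (hxy.mono fun i ⟨hi, hAi⟩ => ⟨⟨x i, hi⟩, Prod.ext rfl hAi⟩)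
  obtain ⟨rfl, rfl⟩ := Prod.ext_iff.1 hd
  exact ⟨d.2, rfl⟩

section

variable {E : Type*} [NormedAddCommGroup E]

theorem integrableOn_Ioo_of_norm_le_mul_sub_rpow_s14 {f : ℝ → E} {a b C r : ℝ} (hr : -1 < r)
    (hf : AEStronglyMeasurable f (volume.restrict (Ioo a b)))
    (hbound : ∀ s ∈ Ioo a b, ‖f s‖ ≤ C * (b - s) ^ r) : IntegrableOn f (Ioo a b) := by
  have hdom : IntegrableOn (fun s => C * (b - s) ^ r) (Ioo a b) := by
    have := ((intervalIntegral.intervalIntegrable_rpow' (a := b - a) (b := 0) hr).comp_sub_left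
      b).const_mul C
    simp only [sub_sub_cancel, sub_zero] at this
    exact this.def'.mono_set (Ioo_subset_Ioc_self.trans Ioc_subset_uIoc)
  exact hdom.mono' hf ((ae_restrict_mem measurableSet_Ioo).mono hbound)

theorem tendsto_setIntegral_Ioo_sub_right [NormedSpace ℝ E] {f : ℝ → E} {a b : ℝ} (hab : a < b)
    (hf : IntegrableOn f (Ioo a b)) :
    Tendsto (fun ε => ∫ s in Ioo a (b - ε), f s) (𝓝[>] 0) (𝓝 (∫ s in Ioo a b, f s)) := by
  have hcont := intervalIntegral.continuousOn_primitive
    ((integrableOn_Icc_iff_integrableOn_Ioo).2 hf) b ⟨hab.le, le_rfl⟩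
  simp only [integral_Ioc_eq_integral_Ioo] at hcont
  have hleft : Tendsto (fun ε : ℝ => b - ε) (𝓝[>] 0) (𝓝[<] b) := by
    have h := (map_subLeft_nhdsGT (c := b) (a := (0 : ℝ))).le
    rwa [sub_zero] at h
  exact hcont.tendsto.comp
    (hleft.mono_right (nhdsWithin_Ico_eq_nhdsLT hab ▸ nhdsWithin_mono b Ico_subset_Icc_self))

theorem norm_sub_le_mul_sub_rpow {B : ℝ → E} {a b l η s t : ℝ}
    (hB : ∀ t ∈ Icc a b, ∀ s ∈ Icc a b, ‖B t - B s‖ ≤ l * |t - s| ^ η)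
    (hs : s ∈ Icc a b) (ht : t ∈ Icc a b) (hst : s ≤ t) :
    ‖B s - B t‖ ≤ l * (t - s) ^ η := by
  simpa only [abs_of_nonpos (sub_nonpos.2 hst), neg_sub] using hB s hs t ht

end

theorem closed_operator_integral_general
    (X : Type*) [NormedAddCommGroup X] [NormedSpace ℝ X]
    (D : Submodule ℝ X) (A : D →ₗ[ℝ] X)
    (hclosed : IsClosed (Set.range fun d : D => ((d : X), A d)))
    (T : ℝ → X →L[ℝ] X) (B : ℝ → X)
    (T₀ η l l₀ M : ℝ) (hη : η ∈ Set.Ioc (0 : ℝ) 1)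
    (hl₀ : 0 ≤ l₀)
    (hB : ∀ t ∈ Set.Icc (0 : ℝ) T₀, ∀ s ∈ Set.Icc (0 : ℝ) T₀,
      ‖B t - B s‖ ≤ l * |t - s| ^ η)
    (hmem : ∀ τ : ℝ, 0 < τ → ∀ x : X, T τ x ∈ D)
    (hAbound : ∀ (τ : ℝ) (hτ : 0 < τ) (x : X),
      ‖A ⟨T τ x, hmem τ hτ x⟩‖ ≤ l₀ / τ * ‖x‖)
    (hTnorm : ∀ τ : ℝ, 0 < τ → ‖T τ‖ ≤ M)
    (t : ℝ) (ht : t ∈ Set.Ioc (0 : ℝ) T₀)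
    (g : ℝ → X)
    (hg : ∀ s : ℝ, ∀ hs : s ∈ Set.Ico (0 : ℝ) t,
      g s = A ⟨T (t - s) (B s - B t), hmem (t - s) (sub_pos.mpr hs.2) (B s - B t)⟩)
    (hcont₁ : ContinuousOn (fun s => T (t - s) (B s - B t)) (Set.Ico 0 t))
    (hcont₂ : ContinuousOn g (Set.Ico 0 t))
    (htrunc : ∀ ε ∈ Set.Ioo (0 : ℝ) t,
      ∃ hw : (∫ s in Set.Ioo (0 : ℝ) (t - ε), T (t - s) (B s - B t)) ∈ D,
        A ⟨∫ s in Set.Ioo (0 : ℝ) (t - ε), T (t - s) (B s - B t), hw⟩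
          = ∫ s in Set.Ioo (0 : ℝ) (t - ε), g s) :
    ∃ hw : (∫ s in Set.Ioo (0 : ℝ) t, T (t - s) (B s - B t)) ∈ D,
      A ⟨∫ s in Set.Ioo (0 : ℝ) t, T (t - s) (B s - B t), hw⟩
        = ∫ s in Set.Ioo (0 : ℝ) t, g s := by
  obtain ⟨ht0, htT₀⟩ := ht
  have hBt (s : ℝ) (hs : s ∈ Ioo 0 t) : ‖B s - B t‖ ≤ l * (t - s) ^ η :=
    norm_sub_le_mul_sub_rpow hB ⟨hs.1.le, hs.2.le.trans htT₀⟩ ⟨ht0.le, htT₀⟩ hs.2.le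
  have hfi : IntegrableOn (fun s => T (t - s) (B s - B t)) (Ioo 0 t) := by
    refine integrableOn_Ioo_of_norm_le_mul_sub_rpow_s14 (C := M * l) (r := η) (by linarith [hη.1])
      ((hcont₁.mono Ioo_subset_Ico_self).aestronglyMeasurable measurableSet_Ioo) fun s hs => ?_
    have hT := hTnorm (t - s) (sub_pos.2 hs.2)
    calc ‖T (t - s) (B s - B t)‖ ≤ ‖T (t - s)‖ * ‖B s - B t‖ := (T (t - s)).le_opNorm _
      _ ≤ M * (l * (t - s) ^ η) :=
        mul_le_mul hT (hBt s hs) (norm_nonneg _) ((norm_nonneg _).trans hT)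
      _ = M * l * (t - s) ^ η := by ring
  have hgi : IntegrableOn g (Ioo 0 t) := by
    refine integrableOn_Ioo_of_norm_le_mul_sub_rpow_s14 (C := l₀ * l) (r := η - 1)
      (by linarith [hη.1])
      ((hcont₂.mono Ioo_subset_Ico_self).aestronglyMeasurable measurableSet_Ioo) fun s hs => ?_
    have hts : 0 < t - s := sub_pos.2 hs.2
    calc ‖g s‖ ≤ l₀ / (t - s) * ‖B s - B t‖ := hg s ⟨hs.1.le, hs.2⟩ ▸ hAbound _ hts _
      _ ≤ l₀ / (t - s) * (l * (t - s) ^ η) := by gcongr; exact hBt s hs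
      _ = l₀ * l * (t - s) ^ (η - 1) := by rw [Real.rpow_sub_one hts.ne']; field_simp
  refine exists_mem_apply_eq_of_isClosed_graph hclosed (tendsto_setIntegral_Ioo_sub_right ht0 hfi)
    (tendsto_setIntegral_Ioo_sub_right ht0 hgi) ?_
  filter_upwards [Ioo_mem_nhdsGT ht0] with ε hε using htrunc ε hε

/-- The closedness argument in the regularity lemma: since A is a closed operator and the
truncated integrals ∫₀^{t−ε} T(t−s)(B(s)−B(t)) ds lie in D with A commuting with them,
the full integral w = ∫₀ᵗ T(t−s)(B(s)−B(t)) ds lies in D and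
A w = ∫₀ᵗ A T(t−s)(B(s)−B(t)) ds. -/
theorem closed_operator_integral
    (X : Type*) [NormedAddCommGroup X] [NormedSpace ℝ X] [CompleteSpace X]
    (D : Submodule ℝ X) (A : D →ₗ[ℝ] X)
    (hclosed : IsClosed (Set.range fun d : D => ((d : X), A d)))
    (T : ℝ → X →L[ℝ] X) (B : ℝ → X)
    (T₀ η l l₀ M : ℝ) (hT₀ : 0 < T₀) (hη : η ∈ Set.Ioc (0 : ℝ) 1)
    (hl : 0 ≤ l) (hl₀ : 0 ≤ l₀) (hM : 0 ≤ M)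
    (hB : ∀ t ∈ Set.Icc (0 : ℝ) T₀, ∀ s ∈ Set.Icc (0 : ℝ) T₀,
      ‖B t - B s‖ ≤ l * |t - s| ^ η)
    (hmem : ∀ τ : ℝ, 0 < τ → ∀ x : X, T τ x ∈ D)
    (hAbound : ∀ (τ : ℝ) (hτ : 0 < τ) (x : X),
      ‖A ⟨T τ x, hmem τ hτ x⟩‖ ≤ l₀ / τ * ‖x‖)
    (hTnorm : ∀ τ : ℝ, 0 < τ → ‖T τ‖ ≤ M)
    (t : ℝ) (ht : t ∈ Set.Ioc (0 : ℝ) T₀)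
    (g : ℝ → X)
    (hg : ∀ s : ℝ, ∀ hs : s ∈ Set.Ico (0 : ℝ) t,
      g s = A ⟨T (t - s) (B s - B t), hmem (t - s) (sub_pos.mpr hs.2) (B s - B t)⟩)
    (hcont₁ : ContinuousOn (fun s => T (t - s) (B s - B t)) (Set.Ico 0 t))
    (hcont₂ : ContinuousOn g (Set.Ico 0 t))
    (htrunc : ∀ ε ∈ Set.Ioo (0 : ℝ) t,
      ∃ hw : (∫ s in Set.Ioo (0 : ℝ) (t - ε), T (t - s) (B s - B t)) ∈ D,
        A ⟨∫ s in Set.Ioo (0 : ℝ) (t - ε), T (t - s) (B s - B t), hw⟩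
          = ∫ s in Set.Ioo (0 : ℝ) (t - ε), g s) :
    ∃ hw : (∫ s in Set.Ioo (0 : ℝ) t, T (t - s) (B s - B t)) ∈ D,
      A ⟨∫ s in Set.Ioo (0 : ℝ) t, T (t - s) (B s - B t), hw⟩
        = ∫ s in Set.Ioo (0 : ℝ) t, g s :=
  closed_operator_integral_general X D A hclosed T B T₀ η l l₀ M hη hl₀ hB hmem hAbound hTnorm t ht
    g hg hcont₁ hcont₂ htrunc
end
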